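/- arXiv:1001.4928 — 3 statements merged into one kernel-verified Lean document; each statement's English description precedes it below -/
import Mathlib

section
/- Let F and D be n×n complex matrices and let w be a nonzero real number (viewed in ℂ). Suppose F² = F, FD = D, DF = D, and D² = (w−1)·F + (w−2)·D. Then E := w⁻¹·(F + D) satisfies E² = E, (F − E)² = F − E, and E·(F − E) = (F − E)·E = 0. Moreover, if trace(D) = 0, then trace(E) = w⁻¹·trace(F). -/
/-! The relations say exactly that `(F + D)² = w • (F + D)`, so `E = w⁻¹ • (F + D)` is idempotent;
since `F` absorbs `F + D` on both sides, `E ≤ F` as idempotents and `F - E` is the complementary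
idempotent below `F`. -/

lemma add_mul_self_eq_smul_of_mul_self_eq {R A : Type*} [CommRing R] [Ring A] [Algebra R A]
    {F D : A} {w : R} (hF : F * F = F) (hFD : F * D = D) (hDF : D * F = D)
    (hD2 : D * D = (w - 1) • F + (w - 2) • D) : (F + D) * (F + D) = w • (F + D) := by
  rw [add_mul, mul_add, mul_add, hF, hFD, hDF, hD2]
  module

lemma isIdempotentElem_inv_smul_of_mul_self_eq_smul {K A : Type*} [Field K] [Ring A]
    [Algebra K A] {x : A} {w : K} (hw : w ≠ 0) (hx : x * x = w • x) :
    IsIdempotentElem (w⁻¹ • x) := by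
  rw [IsIdempotentElem, smul_mul_smul_comm, hx, smul_smul, mul_assoc, inv_mul_cancel₀ hw, mul_one]

theorem stmt_0 {n : ℕ} (F D : Matrix (Fin n) (Fin n) ℂ) (w : ℝ) (hw : w ≠ 0)
    (hF : F * F = F) (hFD : F * D = D) (hDF : D * F = D)
    (hD2 : D * D = ((w : ℂ) - 1) • F + ((w : ℂ) - 2) • D) :
    let E := (w : ℂ)⁻¹ • (F + D)
    E * E = E ∧ (F - E) * (F - E) = F - E ∧ E * (F - E) = 0 ∧ (F - E) * E = 0 ∧
      (D.trace = 0 → E.trace = (w : ℂ)⁻¹ * F.trace) := by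
  intro E
  have hE : IsIdempotentElem E := isIdempotentElem_inv_smul_of_mul_self_eq_smul
    (Complex.ofReal_ne_zero.mpr hw) (add_mul_self_eq_smul_of_mul_self_eq hF hFD hDF hD2)
  have hFE : F * E = E := by simp only [E, mul_smul_comm, mul_add, hF, hFD]
  have hEF : E * F = E := by simp only [E, smul_mul_assoc, add_mul, hF, hDF]
  refine ⟨hE.eq, (hE.sub hF hEF hFE).eq, by rw [mul_sub, hEF, hE.eq, sub_self],
    by rw [sub_mul, hFE, hE.eq, sub_self], fun hD ↦ ?_⟩
  rw [Matrix.trace_smul, Matrix.trace_add, hD, add_zero, smul_eq_mul]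
end

section
/- Let A be a symmetric real n×n matrix of rank r. Then the rank of the Hadamard (entrywise) square A ∘ A is at most r(r+1)/2. -/
/-!
The Hadamard product of vectors in `m → K` is the multiplication of the commutative
algebra `m → K`. If `b₁, …, b_r` is a basis of the column space `W` of `A`, then `W * W`
is spanned by the products `bᵢ * bⱼ`, and by commutativity only the `r(r+1)/2` unordered
pairs `{i, j}` matter. Every column of `A ∘ A` is the square of a column of `A`, so it
lies in `W * W`.
-/

open Module Submodule
open scoped Matrix

namespace Submodule

theorem span_range_mul_span_range {R S ι : Type*} [CommSemiring R] [CommSemiring S] [Algebra R S]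
    (v : ι → S) :
    span R (Set.range v) * span R (Set.range v) =
      span R (Set.range fun p : Sym2 ι ↦ (p.map v).mul) := by
  rw [span_mul_span]
  congr 1
  ext x
  simp only [Set.mem_mul, Set.mem_range]
  constructor
  · rintro ⟨_, ⟨i, rfl⟩, _, ⟨j, rfl⟩, rfl⟩
    exact ⟨s(i, j), rfl⟩
  · rintro ⟨p, rfl⟩
    induction p using Sym2.ind with
    | _ i j => exact ⟨_, ⟨i, rfl⟩, _, ⟨j, rfl⟩, rfl⟩

theorem finrank_mul_self_le {K S : Type*} [Field K] [CommRing S] [Algebra K S]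
    (W : Submodule K S) [FiniteDimensional K W] :
    finrank K ↥(W * W) ≤ finrank K W * (finrank K W + 1) / 2 := by
  let b := finBasis K W
  have hW : span K (Set.range fun i ↦ (b i : S)) = W := by
    have := congrArg (map W.subtype) b.span_eq
    rwa [map_span, map_top, range_subtype, ← Set.range_comp] at this
  calc finrank K ↥(W * W)
      = finrank K ↥(span K (Set.range fun p : Sym2 (Fin (finrank K W)) ↦
          (p.map fun i ↦ (b i : S)).mul)) := by
        conv_lhs => rw [← hW, span_range_mul_span_range]
    _ ≤ Fintype.card (Sym2 (Fin (finrank K W))) := finrank_range_le_card _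
    _ = finrank K W * (finrank K W + 1) / 2 := by
        rw [Sym2.card, Fintype.card_fin, Nat.choose_two_right, Nat.add_sub_cancel, Nat.mul_comm]

end Submodule

namespace Matrix

variable {K m n : Type*} [Field K] [Fintype n]

theorem range_mulVecLin_hadamard_self_le (A : Matrix m n K) :
    LinearMap.range (A ⊙ A).mulVecLin ≤
      LinearMap.range A.mulVecLin * LinearMap.range A.mulVecLin := by
  rw [range_mulVecLin (A ⊙ A), span_le]
  rintro _ ⟨j, rfl⟩
  have hcol : (fun i ↦ A i j) ∈ LinearMap.range A.mulVecLin := by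
    rw [range_mulVecLin]
    exact subset_span ⟨j, rfl⟩
  exact mul_mem_mul hcol hcol

theorem rank_hadamard_self_le [Fintype m] (A : Matrix m n K) :
    (A ⊙ A).rank ≤ A.rank * (A.rank + 1) / 2 :=
  (finrank_mono A.range_mulVecLin_hadamard_self_le).trans (finrank_mul_self_le _)

end Matrix

theorem stmt_7_general {n : ℕ} (A : Matrix (Fin n) (Fin n) ℝ) (r : ℕ)
    (hr : A.rank = r) :
    (Matrix.hadamard A A).rank ≤ r * (r + 1) / 2 :=
  hr ▸ A.rank_hadamard_self_le

theorem stmt_7 {n : ℕ} (A : Matrix (Fin n) (Fin n) ℝ) (hA : A.IsSymm) (r : ℕ)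
    (hr : A.rank = r) :
    (Matrix.hadamard A A).rank ≤ r * (r + 1) / 2 :=
  stmt_7_general A r hr
end

section
/- With the hypotheses and conclusions of the block decomposition above, assume additionally that all row and column sums of C are equal, i.e., C·Jₙ = (k₀ − k)·Jₙ and Jₙ·C = (k₀ − k)·Jₙ for some real k₀, k. Then (a − a′)·(M₁·C − C·M₂) = 0. In particular, if a ≠ a′ then M₁·C = C·M₂. -/
open Matrix

/-- The all-ones matrix. -/
def allOnes (m : Type*) : Matrix m m ℝ := Matrix.of fun _ _ => 1

/-- Expanding `(x * y) * x = x * (y * x)`, the scalar and `j` terms cancel. -/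
theorem smul_mul_sub_mul_eq_zero_of_commute {R A : Type*} [CommRing R] [Ring A] [Algebra R A]
    {x y m₁ m₂ j : A} {s t u : R}
    (hxy : x * y = s • m₁ + t • (1 : A) + u • j)
    (hyx : y * x = s • m₂ + t • (1 : A) + u • j)
    (hj : Commute j x) :
    s • (m₁ * x - x * m₂) = 0 := by
  calc s • (m₁ * x - x * m₂)
      = x * y * x - x * (y * x) - u • (j * x - x * j) := by
        rw [hxy, hyx]
        simp only [add_mul, mul_add, smul_mul_assoc, mul_smul_comm, one_mul, mul_one, smul_sub]
        abel
    _ = 0 := by rw [mul_assoc, hj.eq, sub_self, sub_self, smul_zero, sub_zero]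

theorem stmt_10 {n : ℕ} (M₁ M₂ C : Matrix (Fin n) (Fin n) ℝ) (a b c a' b' c' k₀ k : ℝ)
    (hCCt : C * Cᵀ =
      (a - a') • M₁ + (b - b') • (1 : Matrix _ _ ℝ) + (c - c') • allOnes (Fin n))
    (hCtC : Cᵀ * C =
      (a - a') • M₂ + (b - b') • (1 : Matrix _ _ ℝ) + (c - c') • allOnes (Fin n))
    (hrow : C * allOnes (Fin n) = (k₀ - k) • allOnes (Fin n))
    (hcol : allOnes (Fin n) * C = (k₀ - k) • allOnes (Fin n)) :
    (a - a') • (M₁ * C - C * M₂) = 0 ∧ (a ≠ a' → M₁ * C = C * M₂) := by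
  have key : (a - a') • (M₁ * C - C * M₂) = 0 :=
    smul_mul_sub_mul_eq_zero_of_commute hCCt hCtC (hcol.trans hrow.symm)
  refine ⟨key, fun ha => ?_⟩
  exact sub_eq_zero.mp ((smul_eq_zero.mp key).resolve_left (sub_ne_zero.mpr ha))
end
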